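/- arXiv:2306.02543 — 7 statements merged into one kernel-verified Lean document; each statement's English description precedes it below -/
import Mathlib

section
/- Let n ≥ 1 be an integer, α ∈ [0,1), η > 0, let p ∈ A_α satisfy p_i > 0 for all i, and let û ∈ ℝ^n. Set p̃_i = p_i·exp(η·û_i) for i = 1,…,n, and let π be a permutation of {1,…,n} such that p̃_{π(1)} ≤ … ≤ p̃_{π(n)}. Let i* be the smallest index i ∈ {1,…,n} such that p̃_{π(i)}·(1 − ((i−1)/n)·α) > (α/n)·Σ_{j=i}^n p̃_{π(j)} (such an index exists). Define x ∈ ℝ^n by x_i = α/n if π^{-1}(i) < i*, and x_i = (1 − ((i*−1)/n)·α)·p̃_i / (Σ_{j=i*}^n p̃_{π(j)}) otherwise. Then x ∈ A_α and for every q ∈ A_α one has −η·⟨x, û⟩ + D(x‖p) ≤ −η·⟨q, û⟩ + D(q‖p); that is, x solves the OSMD sampling-distribution update. -/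
open Finset

/-- Unnormalized negative-entropy Bregman divergence
`D(x‖y) = ∑ i, (x i * log (x i / y i) - x i + y i)` (with `0·log 0 = 0`,
which holds automatically since `Real.log 0 = 0`). -/
noncomputable def breg {n : ℕ} (x y : Fin n → ℝ) : ℝ :=
  ∑ i, (x i * Real.log (x i / y i) - x i + y i)

/-- The clipped simplex `A_α = {x : ∑ i, x i = 1 ∧ ∀ i, x i ≥ α / n}`. -/
def clippedSimplex (n : ℕ) (α : ℝ) : Set (Fin n → ℝ) :=
  {x | (∑ i, x i) = 1 ∧ ∀ i, α / n ≤ x i}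

/-!
Tilting by `exp (η u)` turns the objective into `D(· ‖ p̃)` plus a constant, so the claim is that
`x` is the Bregman projection of `p̃` onto `A_α`. By convexity of `t ↦ t log (t / c)`, a point
`x > 0` minimises `D(· ‖ y)` on `A_α` once `∑ i, log (x i / y i) * (q i - x i) ≥ 0` for all
`q ∈ A_α`, and this holds whenever `x = max (α / n) (c • y)` with `c > 0` and `∑ i, x i = 1`: the
constant `log c` integrates to zero against `q - x`, and the remaining factor `log (x i / (c y i))`
vanishes except where `x i = α / n ≤ q i`. The minimality of `i*` is exactly what puts the given
`x` in this form, with `c = (1 - i* α / n) / ∑_{j ≥ i*} p̃_{π j}`.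
-/

section Bregman

open Real

variable {n : ℕ}

theorem mul_log_div_add_sub_le {a t c : ℝ} (ha : 0 < a) (ht : 0 ≤ t) (hc : c ≠ 0) :
    t * log (a / c) + t - a ≤ t * log (t / c) := by
  rcases ht.eq_or_lt with rfl | ht
  · simpa using ha.le
  · have h := mul_le_mul_of_nonneg_left (log_le_sub_one_of_pos (div_pos ha ht)) ht.le
    rw [log_div ha.ne' ht.ne', mul_sub, mul_sub, mul_one, mul_div_cancel₀ _ ht.ne'] at h
    rw [log_div ha.ne' hc, log_div ht.ne' hc]
    linarith

theorem breg_add_sum_log_mul_sub_le {x y q : Fin n → ℝ} (hx : ∀ i, 0 < x i)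
    (hq : ∀ i, 0 ≤ q i) (hy : ∀ i, y i ≠ 0) :
    breg x y + ∑ i, log (x i / y i) * (q i - x i) ≤ breg q y := by
  unfold breg
  rw [← Finset.sum_add_distrib]
  refine Finset.sum_le_sum fun i _ => ?_
  linarith [mul_log_div_add_sub_le (hx i) (hq i) (hy i)]

theorem sum_log_div_mul_sub_nonneg_of_eq_max {x y q : Fin n → ℝ} {α c : ℝ} (hc : 0 < c)
    (hy : ∀ i, 0 < y i) (hx : ∀ i, x i = max (α / n) (c * y i)) (hx1 : ∑ i, x i = 1)
    (hq : q ∈ clippedSimplex n α) : 0 ≤ ∑ i, log (x i / y i) * (q i - x i) := by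
  obtain ⟨hq1, hqα⟩ := hq
  have hcy : ∀ i, c * y i ≤ x i := fun i => hx i ▸ le_max_right _ _
  have hxpos : ∀ i, 0 < x i := fun i => (mul_pos hc (hy i)).trans_le (hcy i)
  have hshift : ∑ i, log (x i / y i) * (q i - x i) =
      ∑ i, log (x i / (c * y i)) * (q i - x i) := by
    have hsum : ∑ i, log c * (q i - x i) = 0 := by
      rw [← Finset.mul_sum, Finset.sum_sub_distrib, hq1, hx1, sub_self, mul_zero]
    rw [← sub_zero (∑ i, _), ← hsum, ← Finset.sum_sub_distrib]
    refine Finset.sum_congr rfl fun i _ => ?_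
    rw [div_mul_eq_div_div_swap, log_div (div_pos (hxpos i) (hy i)).ne' hc.ne', sub_mul]
  rw [hshift]
  refine Finset.sum_nonneg fun i _ => ?_
  have hlog : 0 ≤ log (x i / (c * y i)) :=
    log_nonneg ((one_le_div (mul_pos hc (hy i))).2 (hcy i))
  rcases max_choice (α / n) (c * y i) with h | h <;> rw [← hx i] at h
  · exact mul_nonneg hlog (sub_nonneg.2 (h ▸ hqα i))
  · rw [← h, div_self (hxpos i).ne', log_one, zero_mul]

theorem breg_le_of_eq_max {x y q : Fin n → ℝ} {α c : ℝ} (hα : 0 ≤ α) (hc : 0 < c)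
    (hy : ∀ i, 0 < y i) (hx : ∀ i, x i = max (α / n) (c * y i)) (hx1 : ∑ i, x i = 1)
    (hq : q ∈ clippedSimplex n α) : breg x y ≤ breg q y := by
  have hxpos : ∀ i, 0 < x i := fun i => (mul_pos hc (hy i)).trans_le (hx i ▸ le_max_right _ _)
  have hq0 : ∀ i, 0 ≤ q i := fun i => (by positivity : 0 ≤ α / n).trans (hq.2 i)
  linarith [breg_add_sum_log_mul_sub_le hxpos hq0 fun i => (hy i).ne',
    sum_log_div_mul_sub_nonneg_of_eq_max hc hy hx hx1 hq]

theorem neg_mul_sum_mul_add_breg_eq (η : ℝ) (z u p : Fin n → ℝ) (hp : ∀ i, p i ≠ 0) :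
    -η * ∑ i, z i * u i + breg z p =
      breg z (fun i => p i * exp (η * u i)) + ∑ i, (p i - p i * exp (η * u i)) := by
  unfold breg
  rw [Finset.mul_sum, ← Finset.sum_add_distrib, ← Finset.sum_add_distrib]
  refine Finset.sum_congr rfl fun i _ => ?_
  rcases eq_or_ne (z i) 0 with hz | hz
  · simp [hz]
  · rw [← div_div, log_div (div_ne_zero hz (hp i)) (exp_ne_zero _), log_exp]
    ring

end Bregman

section Threshold

variable {n : ℕ} {α : ℝ} {a : Fin n → ℝ} {k : Fin n}

def clipThresholdSet (n : ℕ) (α : ℝ) (a : Fin n → ℝ) : Set (Fin n) :=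
  {i | a i * (1 - ((i : ℕ) : ℝ) / n * α) > α / n * ∑ j ∈ Finset.Ici i, a j}

theorem one_sub_div_mul_pos (k : Fin n) (hα : α ≤ 1) : 0 < 1 - ((k : ℕ) : ℝ) / n * α := by
  have hn : (0 : ℝ) < n := by exact_mod_cast k.pos
  have hk : ((k : ℕ) : ℝ) / n < 1 := (div_lt_one hn).2 (by exact_mod_cast k.isLt)
  nlinarith [div_nonneg (Nat.cast_nonneg (k : ℕ)) hn.le]

theorem mul_one_sub_le_of_lt_clipThreshold (ha : Monotone a) (hα : α ≤ 1)
    (hk : IsLeast (clipThresholdSet n α a) k) {j : Fin n} (hj : j < k) :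
    a j * (1 - ((k : ℕ) : ℝ) / n * α) ≤ α / n * ∑ i ∈ Finset.Ici k, a i := by
  have hk0 : 0 < (k : ℕ) := lt_of_le_of_lt (Nat.zero_le _) hj
  set m : Fin n := ⟨k - 1, by omega⟩
  have hjm : j ≤ m := Fin.le_def.2 (by simp only [m]; omega)
  have hIci : Finset.Ici m = (Finset.Ici k).cons m (by simp [m, Fin.le_def]; omega) := by
    ext i; simp only [Finset.mem_Ici, Finset.mem_cons, Fin.le_def, Fin.ext_iff, m]; omega
  have hm : m ∉ clipThresholdSet n α a := fun h =>
    absurd (hk.2 h) (by simp [m, Fin.le_def]; omega)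
  simp only [clipThresholdSet, Set.mem_ofPred_eq, gt_iff_lt, not_lt, hIci, Finset.sum_cons] at hm
  have hmk : ((m : ℕ) : ℝ) = ((k : ℕ) : ℝ) - 1 := by simp [m, Nat.cast_sub hk0]
  rw [hmk] at hm
  have hn : (n : ℝ) ≠ 0 := by exact_mod_cast k.pos.ne'
  calc a j * (1 - ((k : ℕ) : ℝ) / n * α)
      ≤ a m * (1 - ((k : ℕ) : ℝ) / n * α) :=
        mul_le_mul_of_nonneg_right (ha hjm) (one_sub_div_mul_pos k hα).le
    _ = a m * (1 - (((k : ℕ) : ℝ) - 1) / n * α) - α / n * a m := by field_simp; ring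
    _ ≤ α / n * ∑ i ∈ Finset.Ici k, a i := by linarith

theorem lt_mul_one_sub_of_clipThreshold_le (ha : Monotone a) (hα : α ≤ 1)
    (hk : k ∈ clipThresholdSet n α a) {j : Fin n} (hj : k ≤ j) :
    α / n * ∑ i ∈ Finset.Ici k, a i < a j * (1 - ((k : ℕ) : ℝ) / n * α) :=
  hk.trans_le (mul_le_mul_of_nonneg_right (ha hj) (one_sub_div_mul_pos k hα).le)

theorem ite_clip_eq_max (ha : Monotone a) (hapos : ∀ i, 0 < a i) (hα : α ≤ 1)
    (hk : IsLeast (clipThresholdSet n α a) k) (j : Fin n) :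
    (if j < k then α / n
      else (1 - ((k : ℕ) : ℝ) / n * α) * a j / ∑ i ∈ Finset.Ici k, a i) =
      max (α / n) ((1 - ((k : ℕ) : ℝ) / n * α) / (∑ i ∈ Finset.Ici k, a i) * a j) := by
  have hS : 0 < ∑ i ∈ Finset.Ici k, a i :=
    Finset.sum_pos (fun i _ => hapos i) ⟨k, Finset.mem_Ici.2 le_rfl⟩
  rw [div_mul_eq_mul_div (1 - _) _ (a j)]
  split_ifs with hj
  · refine (max_eq_left ?_).symm
    rw [div_le_iff₀ hS]
    linarith [mul_one_sub_le_of_lt_clipThreshold ha hα hk hj]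
  · refine (max_eq_right ?_).symm
    rw [le_div_iff₀ hS]
    linarith [lt_mul_one_sub_of_clipThreshold_le ha hα hk.1 (not_lt.1 hj)]

theorem sum_ite_clip_eq_one (a : Fin n → ℝ) (k : Fin n) (hS : ∑ i ∈ Finset.Ici k, a i ≠ 0) :
    ∑ j, (if j < k then α / n
      else (1 - ((k : ℕ) : ℝ) / n * α) * a j / ∑ i ∈ Finset.Ici k, a i) = 1 := by
  simp only [Finset.sum_ite, not_lt, Finset.filter_gt_eq_Iio, Finset.filter_le_eq_Ici,
    Finset.sum_const, Fin.card_Iio, nsmul_eq_mul, ← Finset.sum_div, ← Finset.mul_sum]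
  field_simp
  ring

end Threshold

theorem stmt_0_general (n : ℕ) (α η : ℝ) (hα : 0 ≤ α ∧ α < 1)
    (p : Fin n → ℝ) (hppos : ∀ i, 0 < p i)
    (u : Fin n → ℝ) (pt : Fin n → ℝ)
    (hpt : ∀ i, pt i = p i * Real.exp (η * u i))
    (π : Equiv.Perm (Fin n)) (hπ : Monotone fun i => pt (π i))
    (istar : Fin n)
    (histar : IsLeast {i : Fin n |
      pt (π i) * (1 - ((i : ℕ) : ℝ) / n * α) > α / n * ∑ j ∈ Finset.Ici i, pt (π j)} istar)
    (x : Fin n → ℝ)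
    (hx : ∀ i, x i = if π.symm i < istar then α / n
      else (1 - ((istar : ℕ) : ℝ) / n * α) * pt i / ∑ j ∈ Finset.Ici istar, pt (π j)) :
    x ∈ clippedSimplex n α ∧
      ∀ q ∈ clippedSimplex n α,
        -η * (∑ i, x i * u i) + breg x p ≤ -η * (∑ i, q i * u i) + breg q p := by
  obtain ⟨hα0, hα1⟩ := hα
  have hptpos : ∀ i, 0 < pt i := fun i => hpt i ▸ mul_pos (hppos i) (Real.exp_pos _)
  set S := ∑ j ∈ Finset.Ici istar, pt (π j)
  have hS : 0 < S := Finset.sum_pos (fun j _ => hptpos (π j)) ⟨istar, Finset.mem_Ici.2 le_rfl⟩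
  set c := (1 - ((istar : ℕ) : ℝ) / n * α) / S
  have hc : 0 < c := div_pos (one_sub_div_mul_pos istar hα1.le) hS
  have hxπ : ∀ j, x (π j) =
      if j < istar then α / n else (1 - ((istar : ℕ) : ℝ) / n * α) * pt (π j) / S := by
    simpa using fun j => hx (π j)
  have hxmax : ∀ i, x i = max (α / n) (c * pt i) := fun i => by
    simpa using (hxπ (π.symm i)).trans
      (ite_clip_eq_max hπ (fun j => hptpos (π j)) hα1.le histar _)
  have hx1 : ∑ i, x i = 1 := by
    rw [← Equiv.sum_comp π, Finset.sum_congr rfl fun j _ => hxπ j]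
    exact sum_ite_clip_eq_one _ _ hS.ne'
  refine ⟨⟨hx1, fun i => hxmax i ▸ le_max_left _ _⟩, fun q hq => ?_⟩
  have hp0 : ∀ i, p i ≠ 0 := fun i => (hppos i).ne'
  rw [neg_mul_sum_mul_add_breg_eq η x u p hp0, neg_mul_sum_mul_add_breg_eq η q u p hp0,
    ← funext hpt]
  exact add_le_add_left (breg_le_of_eq_max hα0 hc hptpos hxmax hx1 hq) _

theorem stmt_0 (n : ℕ) (hn : 1 ≤ n) (α η : ℝ) (hα : 0 ≤ α ∧ α < 1) (hη : 0 < η)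
    (p : Fin n → ℝ) (hp : p ∈ clippedSimplex n α) (hppos : ∀ i, 0 < p i)
    (u : Fin n → ℝ) (pt : Fin n → ℝ)
    (hpt : ∀ i, pt i = p i * Real.exp (η * u i))
    (π : Equiv.Perm (Fin n)) (hπ : Monotone fun i => pt (π i))
    (istar : Fin n)
    (histar : IsLeast {i : Fin n |
      pt (π i) * (1 - ((i : ℕ) : ℝ) / n * α) > α / n * ∑ j ∈ Finset.Ici i, pt (π j)} istar)
    (x : Fin n → ℝ)
    (hx : ∀ i, x i = if π.symm i < istar then α / n
      else (1 - ((istar : ℕ) : ℝ) / n * α) * pt i / ∑ j ∈ Finset.Ici istar, pt (π j)) :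
    x ∈ clippedSimplex n α ∧
      ∀ q ∈ clippedSimplex n α,
        -η * (∑ i, x i * u i) + breg x p ≤ -η * (∑ i, q i * u i) + breg q p :=
  stmt_0_general n α η hα p hppos u pt hpt π hπ istar histar x hx
end

section
/- Let n ≥ 1 be an integer, α ∈ [0,1), and let y ∈ (0,∞)^n satisfy y_1 ≤ y_2 ≤ … ≤ y_n. Let i* be the smallest index i ∈ {1,…,n} such that y_i·(1 − ((i−1)/n)·α) > (α/n)·Σ_{j=i}^n y_j (such an index exists). Define x ∈ ℝ^n by x_i = α/n for i < i*, and x_i = (1 − ((i*−1)/n)·α)·y_i / (Σ_{j=i*}^n y_j) for i ≥ i*. Then x ∈ A_α and D(x‖y) ≤ D(v‖y) for every v ∈ A_α; that is, x is the Bregman (KL-type) projection of y onto the clipped simplex A_α. -/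
open Finset

/-! The candidate `x` satisfies the KKT conditions of minimizing the convex function `D(·‖y)`
on `A_α`: for `i ≥ i*` it equals `μ y_i` with `μ = (1 - i* α / n) / ∑_{j ≥ i*} y_j`, while for
`i < i*` the constraint `x_i = α/n` is active and `μ y_i ≤ α/n`, because the threshold test fails
at `i* - 1` and `y` is monotone. The first-order inequality
`D(v‖y) ≥ D(x‖y) + ∑ log (x_i / y_i) (v_i - x_i)` then finishes the proof: after shifting the
gradient by `log μ` its entries vanish on the free coordinates and are nonnegative on the active
ones, where `v_i - x_i ≥ 0`. -/

open Real

-- The tangent line at `x` of the convex function `t ↦ t * log (t / y) - t + y`, including `v = 0`.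
lemma mul_log_div_add_log_div_mul_sub_le {x v y : ℝ} (hx : 0 < x) (hv : 0 ≤ v) (hy : 0 < y) :
    x * log (x / y) - x + y + log (x / y) * (v - x) ≤ v * log (v / y) - v + y := by
  rcases hv.eq_or_lt with rfl | hv
  · simp only [zero_div, log_zero, mul_zero]
    linarith
  · have hlog : log (v / y) = log (x / y) - log (x / v) := by
      rw [log_div hx.ne' hy.ne', log_div hv.ne' hy.ne', log_div hx.ne' hv.ne']
      ring
    have hle : v * log (x / v) ≤ x - v := by
      calc v * log (x / v) ≤ v * (x / v - 1) :=
            mul_le_mul_of_nonneg_left (log_le_sub_one_of_pos (div_pos hx hv)) hv.le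
        _ = x - v := by field_simp
    rw [hlog]
    linarith

lemma breg_add_sum_log_div_mul_sub_le {n : ℕ} {x v y : Fin n → ℝ} (hx : ∀ i, 0 < x i)
    (hv : ∀ i, 0 ≤ v i) (hy : ∀ i, 0 < y i) :
    breg x y + ∑ i, log (x i / y i) * (v i - x i) ≤ breg v y := by
  rw [breg, breg, ← sum_add_distrib]
  exact sum_le_sum fun i _ => mul_log_div_add_log_div_mul_sub_le (hx i) (hv i) (hy i)

theorem breg_le_breg_of_kkt {n : ℕ} {α μ : ℝ} {x y : Fin n → ℝ} (hα : 0 ≤ α)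
    (hy : ∀ i, 0 < y i) (hμ : 0 < μ) (hx : x ∈ clippedSimplex n α)
    (hkkt : ∀ i, x i = μ * y i ∨ (x i = α / n ∧ μ * y i ≤ x i)) :
    ∀ v ∈ clippedSimplex n α, breg x y ≤ breg v y := by
  intro v ⟨hv_sum, hv_ge⟩
  have hxpos : ∀ i, 0 < x i := fun i => by
    rcases hkkt i with h | ⟨-, h⟩
    · exact h ▸ mul_pos hμ (hy i)
    · exact (mul_pos hμ (hy i)).trans_le h
  have hvnonneg : ∀ i, 0 ≤ v i := fun i => (by positivity : 0 ≤ α / n).trans (hv_ge i)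
  -- `∑ (v i - x i) = 0`, so the gradient may be shifted by the constant `log μ`.
  have hshift : ∑ i, log (x i / y i) * (v i - x i)
      = ∑ i, (log (x i / y i) - log μ) * (v i - x i) := by
    simp only [sub_mul, sum_sub_distrib, ← mul_sum, hv_sum, hx.1, sub_self, mul_zero, sub_zero]
  have hgrad : 0 ≤ ∑ i, log (x i / y i) * (v i - x i) := by
    rw [hshift]
    refine sum_nonneg fun i _ => ?_
    rcases hkkt i with h | ⟨hxi, h⟩
    · rw [h, mul_div_cancel_right₀ μ (hy i).ne', sub_self, zero_mul]
    · have hlog : log μ ≤ log (x i / y i) :=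
        log_le_log hμ ((le_div_iff₀ (hy i)).2 h)
      exact mul_nonneg (sub_nonneg.2 hlog) (sub_nonneg.2 (hxi ▸ hv_ge i))
  linarith [breg_add_sum_log_div_mul_sub_le hxpos hvnonneg hy]

section Threshold

variable {n : ℕ} {α : ℝ} {y : Fin n → ℝ}

lemma mul_le_of_not_threshold {k l : Fin n} (hkl : (l : ℕ) = k + 1)
    (hk : y k * (1 - ((k : ℕ) : ℝ) / n * α) ≤ α / n * ∑ j ∈ Ici k, y j) :
    y k * (1 - ((l : ℕ) : ℝ) / n * α) ≤ α / n * ∑ j ∈ Ici l, y j := by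
  have hIoi : Ioi k = Ici l := by
    ext j
    simp only [mem_Ioi, mem_Ici, Fin.lt_def, Fin.le_def]
    omega
  rw [← add_sum_Ioi_eq_sum_Ici, hIoi] at hk
  rw [hkl]
  push_cast
  linear_combination hk

lemma mul_le_of_lt_isLeast_threshold (hy : Monotone y) {istar : Fin n}
    (histar : IsLeast {i : Fin n |
      y i * (1 - ((i : ℕ) : ℝ) / n * α) > α / n * ∑ j ∈ Finset.Ici i, y j} istar)
    (hc : 0 ≤ 1 - ((istar : ℕ) : ℝ) / n * α) {i : Fin n} (hi : i < istar) :
    y i * (1 - ((istar : ℕ) : ℝ) / n * α) ≤ α / n * ∑ j ∈ Ici istar, y j := by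
  have hi' : (i : ℕ) < istar := hi
  let k : Fin n := ⟨istar - 1, by omega⟩
  have hk : y k * (1 - ((k : ℕ) : ℝ) / n * α) ≤ α / n * ∑ j ∈ Ici k, y j :=
    not_lt.1 fun hlt => absurd (histar.2 hlt) (by simp only [not_le, Fin.lt_def, k]; omega)
  calc y i * (1 - ((istar : ℕ) : ℝ) / n * α)
      ≤ y k * (1 - ((istar : ℕ) : ℝ) / n * α) :=
        mul_le_mul_of_nonneg_right (hy (by simp only [Fin.le_def, k]; omega)) hc
    _ ≤ α / n * ∑ j ∈ Ici istar, y j := mul_le_of_not_threshold (by simp only [k]; omega) hk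

end Threshold

theorem stmt_1_general (n : ℕ) (α : ℝ) (hα : 0 ≤ α ∧ α < 1)
    (y : Fin n → ℝ) (hypos : ∀ i, 0 < y i) (hymono : Monotone y)
    (istar : Fin n)
    (histar : IsLeast {i : Fin n |
      y i * (1 - ((i : ℕ) : ℝ) / n * α) > α / n * ∑ j ∈ Finset.Ici i, y j} istar)
    (x : Fin n → ℝ)
    (hx : ∀ i, x i = if i < istar then α / n
      else (1 - ((istar : ℕ) : ℝ) / n * α) * y i / ∑ j ∈ Finset.Ici istar, y j) :
    x ∈ clippedSimplex n α ∧ ∀ v ∈ clippedSimplex n α, breg x y ≤ breg v y := by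
  set S := ∑ j ∈ Ici istar, y j
  set c := 1 - ((istar : ℕ) : ℝ) / n * α
  have hS : 0 < S := sum_pos (fun i _ => hypos i) ⟨istar, mem_Ici.2 le_rfl⟩
  have hstar : α / n * S < y istar * c := histar.1
  have hc : 0 < c :=
    pos_of_mul_pos_right ((mul_nonneg (div_nonneg hα.1 n.cast_nonneg) hS.le).trans_lt hstar)
      (hypos istar).le
  have hsum : ∑ i, x i = 1 := by
    rw [sum_congr rfl fun i _ => hx i, sum_ite, filter_gt_eq_Iio]
    simp only [not_lt, filter_le_eq_Ici, sum_const, Fin.card_Iio, nsmul_eq_mul, ← sum_div,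
      ← mul_sum]
    change _ + c * S / S = 1
    rw [mul_div_cancel_right₀ c hS.ne']
    ring
  have hmem : x ∈ clippedSimplex n α := by
    refine ⟨hsum, fun i => ?_⟩
    rw [hx i]
    split_ifs with hi
    · exact le_rfl
    · rw [le_div_iff₀ hS]
      nlinarith [hymono (not_lt.1 hi)]
  refine ⟨hmem, breg_le_breg_of_kkt hα.1 hypos (div_pos hc hS) hmem fun i => ?_⟩
  rw [hx i]
  split_ifs with hi
  · refine Or.inr ⟨rfl, ?_⟩
    rw [div_mul_eq_mul_div, div_le_iff₀ hS, mul_comm]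
    exact mul_le_of_lt_isLeast_threshold hymono histar hc.le hi
  · exact Or.inl (by ring)

theorem stmt_1 (n : ℕ) (hn : 1 ≤ n) (α : ℝ) (hα : 0 ≤ α ∧ α < 1)
    (y : Fin n → ℝ) (hypos : ∀ i, 0 < y i) (hymono : Monotone y)
    (istar : Fin n)
    (histar : IsLeast {i : Fin n |
      y i * (1 - ((i : ℕ) : ℝ) / n * α) > α / n * ∑ j ∈ Finset.Ici i, y j} istar)
    (x : Fin n → ℝ)
    (hx : ∀ i, x i = if i < istar then α / n
      else (1 - ((istar : ℕ) : ℝ) / n * α) * y i / ∑ j ∈ Finset.Ici istar, y j) :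
    x ∈ clippedSimplex n α ∧ ∀ v ∈ clippedSimplex n α, breg x y ≤ breg v y :=
  stmt_1_general n α hα y hypos hymono istar histar x hx
end

section
/- Let n ≥ 1 be an integer, α ∈ [0,1), and let y ∈ (0,∞)^n satisfy y_1 ≤ y_2 ≤ … ≤ y_n. Let i* be the smallest index i ∈ {1,…,n} such that y_i·(1 − ((i−1)/n)·α) > (α/n)·Σ_{j=i}^n y_j. Define x ∈ ℝ^n by x_i = α/n for i < i*, and x_i = (1 − ((i*−1)/n)·α)·y_i / (Σ_{j=i*}^n y_j) for i ≥ i*. Then Σ_{i=1}^n x_i = 1 and x_i ≥ α/n for every i ∈ {1,…,n}; that is, x lies in the clipped simplex A_α. -/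
open Finset

theorem Fin.sum_ite_lt {M : Type*} [AddCommMonoid M] {n : ℕ} (k : Fin n) (a : M)
    (f : Fin n → M) :
    ∑ i, (if i < k then a else f i) = (k : ℕ) • a + ∑ i ∈ Ici k, f i := by
  simp only [sum_ite, not_lt, filter_gt_eq_Iio, filter_le_eq_Ici, Finset.sum_const,
    Fin.card_Iio]

theorem Finset.sum_mul_div_sum_self {ι 𝕜 : Type*} [Field 𝕜] (s : Finset ι) (c : 𝕜)
    (y : ι → 𝕜) (hs : ∑ j ∈ s, y j ≠ 0) :
    ∑ i ∈ s, c * y i / ∑ j ∈ s, y j = c := by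
  rw [← sum_div, ← mul_sum, mul_div_cancel_right₀ _ hs]

theorem stmt_3_general (n : ℕ) (α : ℝ) (hα : 0 ≤ α ∧ α < 1)
    (y : Fin n → ℝ) (hypos : ∀ i, 0 < y i) (hymono : Monotone y)
    (istar : Fin n)
    (histar : IsLeast {i : Fin n |
      y i * (1 - ((i : ℕ) : ℝ) / n * α) > α / n * ∑ j ∈ Finset.Ici i, y j} istar)
    (x : Fin n → ℝ)
    (hx : ∀ i, x i = if i < istar then α / n
      else (1 - ((istar : ℕ) : ℝ) / n * α) * y i / ∑ j ∈ Finset.Ici istar, y j) :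
    (∑ i, x i) = 1 ∧ ∀ i, α / n ≤ x i := by
  obtain ⟨hstar, -⟩ := histar
  set S := ∑ j ∈ Ici istar, y j
  set c := 1 - ((istar : ℕ) : ℝ) / n * α
  have hS : 0 < S := sum_pos (fun j _ => hypos j) ⟨istar, mem_Ici.2 le_rfl⟩
  have hc : 0 < c := by
    have hαS : 0 ≤ α / n * S := mul_nonneg (div_nonneg hα.1 n.cast_nonneg) hS.le
    exact pos_of_mul_pos_right (hstar.trans_le' hαS) (hypos istar).le
  refine ⟨?_, fun i => ?_⟩
  · simp only [hx, Fin.sum_ite_lt]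
    rw [sum_mul_div_sum_self _ _ _ hS.ne', nsmul_eq_mul]
    ring
  · rw [hx]
    split_ifs with h
    · rfl
    · -- monotonicity of `y` carries the defining inequality of `istar` to every `i ≥ istar`
      rw [le_div_iff₀ hS]
      calc α / n * S ≤ y istar * c := hstar.le
        _ ≤ c * y i := by
          rw [mul_comm]; exact mul_le_mul_of_nonneg_left (hymono (not_lt.1 h)) hc.le

theorem stmt_3 (n : ℕ) (hn : 1 ≤ n) (α : ℝ) (hα : 0 ≤ α ∧ α < 1)
    (y : Fin n → ℝ) (hypos : ∀ i, 0 < y i) (hymono : Monotone y)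
    (istar : Fin n)
    (histar : IsLeast {i : Fin n |
      y i * (1 - ((i : ℕ) : ℝ) / n * α) > α / n * ∑ j ∈ Finset.Ici i, y j} istar)
    (x : Fin n → ℝ)
    (hx : ∀ i, x i = if i < istar then α / n
      else (1 - ((istar : ℕ) : ℝ) / n * α) * y i / ∑ j ∈ Finset.Ici istar, y j) :
    (∑ i, x i) = 1 ∧ ∀ i, α / n ≤ x i :=
  stmt_3_general n α hα y hypos hymono istar histar x hx
end

section
/- Let n ≥ 1 be an integer, η > 0, p ∈ (0,∞)^n, and û ∈ ℝ^n, and set p̃_i = p_i·exp(η·û_i) for i = 1,…,n. Then for every x ∈ [0,∞)^n, η·⟨x − p, û⟩ = D(p‖p̃) + D(x‖p) − D(x‖p̃), and consequently η·⟨x − p, û⟩ ≤ D(p‖p̃) + D(x‖p). -/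
open Finset

theorem stmt_7 (n : ℕ) (hn : 1 ≤ n) (η : ℝ) (hη : 0 < η)
    (p : Fin n → ℝ) (hppos : ∀ i, 0 < p i) (u : Fin n → ℝ)
    (pt : Fin n → ℝ) (hpt : ∀ i, pt i = p i * Real.exp (η * u i)) :
    ∀ x : Fin n → ℝ, (∀ i, 0 ≤ x i) →
      η * (∑ i, (x i - p i) * u i) = breg p pt + breg x p - breg x pt ∧
        η * (∑ i, (x i - p i) * u i) ≤ breg p pt + breg x p := by
  intro x hx
  have hbreg_nonneg : 0 ≤ breg x pt := by
    apply Finset.sum_nonneg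
    intro i _
    have hpti : 0 < pt i := by
      rw [hpt i]; exact mul_pos (hppos i) (Real.exp_pos _)
    rcases eq_or_lt_of_le (hx i) with h0 | hxi
    · simp [← h0]; linarith
    · have := Real.log_le_sub_one_of_pos (div_pos hpti hxi)
      rw [Real.log_div (ne_of_gt hpti) (ne_of_gt hxi)] at this
      have h2 : Real.log (x i / pt i) = Real.log (x i) - Real.log (pt i) :=
        Real.log_div (ne_of_gt hxi) (ne_of_gt hpti)
      have h3 : x i * (Real.log (pt i) - Real.log (x i)) ≤ x i * (pt i / x i - 1) :=
        mul_le_mul_of_nonneg_left this (hx i)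
      have h4 : x i * (pt i / x i) = pt i := by field_simp
      nlinarith [h3, h4]
  have key : η * (∑ i, (x i - p i) * u i) = breg p pt + breg x p - breg x pt := by
    unfold breg
    rw [Finset.mul_sum, ← Finset.sum_add_distrib, ← Finset.sum_sub_distrib]
    apply Finset.sum_congr rfl
    intro i _
    have hpi := hppos i
    have hpti : 0 < pt i := by
      rw [hpt i]; exact mul_pos hpi (Real.exp_pos _)
    have hlogpt : Real.log (pt i) = Real.log (p i) + η * u i := by
      rw [hpt i, Real.log_mul (ne_of_gt hpi) (ne_of_gt (Real.exp_pos _)), Real.log_exp]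
    have h1 : Real.log (p i / pt i) = -(η * u i) := by
      rw [Real.log_div (ne_of_gt hpi) (ne_of_gt hpti), hlogpt]; ring
    rcases eq_or_lt_of_le (hx i) with h0 | hxi
    · simp [← h0, h1]; ring
    · have h2 : Real.log (x i / p i) = Real.log (x i) - Real.log (p i) :=
        Real.log_div (ne_of_gt hxi) (ne_of_gt hpi)
      have h3 : Real.log (x i / pt i) = Real.log (x i) - Real.log (pt i) :=
        Real.log_div (ne_of_gt hxi) (ne_of_gt hpti)
      rw [h1, h2, h3, hlogpt]; ring
  exact ⟨key, by linarith⟩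
end

section
/- Let n ≥ 1 be an integer, η > 0, let p ∈ (0,∞)^n satisfy Σ_{i=1}^n p_i = 1, let û ∈ ℝ^n, and set p̃_i = p_i·exp(η·û_i) for i = 1,…,n. Then D(p‖p̃) = Σ_{i=1}^n p_i·(exp(η·û_i) − 1 − η·û_i). Moreover, if û_i ≤ 0 for every i, then D(p‖p̃) ≤ (η²/2)·Σ_{i=1}^n p_i·û_i². -/
open Finset

lemma exp_quad_bound {x : ℝ} (hx : x ≤ 0) : Real.exp x - 1 - x ≤ x ^ 2 / 2 := by
  set g : ℝ → ℝ := fun y => Real.exp y - 1 - y - y ^ 2 / 2 with hg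
  have hderiv : ∀ y : ℝ, HasDerivAt g (Real.exp y - 1 - y) y := by
    intro y
    have h : HasDerivAt g (Real.exp y - 1 - 2 * y ^ 1 / 2) y := by
      exact (((Real.hasDerivAt_exp y).sub_const 1).sub (hasDerivAt_id y)).sub
        (((hasDerivAt_pow 2 y)).div_const 2)
    convert h using 1
    ring
  have hmono : Monotone g := by
    apply monotone_of_deriv_nonneg
    · exact fun y => (hderiv y).differentiableAt
    · intro y
      rw [(hderiv y).deriv]
      have := Real.add_one_le_exp y
      linarith
  have := hmono hx
  simp only [hg] at this
  simp only [Real.exp_zero] at this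
  nlinarith [this]

theorem stmt_8 (n : ℕ) (hn : 1 ≤ n) (η : ℝ) (hη : 0 < η)
    (p : Fin n → ℝ) (hppos : ∀ i, 0 < p i) (hpsum : (∑ i, p i) = 1)
    (u : Fin n → ℝ) (pt : Fin n → ℝ) (hpt : ∀ i, pt i = p i * Real.exp (η * u i)) :
    breg p pt = ∑ i, p i * (Real.exp (η * u i) - 1 - η * u i) ∧
      ((∀ i, u i ≤ 0) → breg p pt ≤ η ^ 2 / 2 * ∑ i, p i * u i ^ 2) := by
  have key : breg p pt = ∑ i, p i * (Real.exp (η * u i) - 1 - η * u i) := by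
    unfold breg
    apply Finset.sum_congr rfl
    intro i _
    rw [hpt i]
    have hp := (hppos i).ne'
    have he := (Real.exp_pos (η * u i)).ne'
    rw [Real.log_div hp (mul_ne_zero hp he), Real.log_mul hp he, Real.log_exp]
    ring
  refine ⟨key, fun hu => ?_⟩
  rw [key, Finset.mul_sum]
  apply Finset.sum_le_sum
  intro i _
  have hx : η * u i ≤ 0 := mul_nonpos_of_nonneg_of_nonpos hη.le (hu i)
  have := exp_quad_bound hx
  have hpi := (hppos i).le
  nlinarith [this, hpi]
end

section
/- Let n ≥ 1 be an integer, α ∈ (0,1), η > 0, and T ≥ 1. Let p⁰ ∈ A_α, let û⁰,…,û^{T−1} ∈ ℝ^n, and for t = 0,…,T−1 let p^{t+1} be a minimizer of q ↦ −η·⟨q, û^t⟩ + D(q‖p^t) over A_α. Set p̃^{t+1}_i = p^t_i·exp(η·û^t_i). Then for every p ∈ A_α, Σ_{t=0}^{T−1} ⟨p − p^t, û^t⟩ ≤ (1/η)·( D(p‖p⁰) + Σ_{t=0}^{T−1} D(p^t‖p̃^{t+1}) ). -/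
open Finset

/-!
Each round of entropic mirror descent is a Bregman projection: since
`D(q‖p e^{ηu}) = D(q‖p) - η⟨q, u⟩ + const`, the iterate `p^{t+1}` minimises `D(·‖p̃^{t+1})`
over the convex set `A_α`. The Pythagorean inequality for Bregman projections,
`D(p‖p^{t+1}) + D(p^{t+1}‖p̃^{t+1}) ≤ D(p‖p̃^{t+1})`, combined with the three-point identity,
gives `η⟨p - p^t, û^t⟩ ≤ D(p‖p^t) - D(p‖p^{t+1}) + D(p^t‖p̃^{t+1})`, and summing over `t`
telescopes.
-/

open Real InformationTheory Filter Topology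

lemma klFun_le_sq_sub_one {t : ℝ} (ht : 0 ≤ t) : klFun t ≤ (t - 1) ^ 2 := by
  rcases ht.eq_or_lt with rfl | ht
  · simp [klFun_zero]
  · have := mul_le_mul_of_nonneg_left (log_le_sub_one_of_pos ht) ht.le
    rw [klFun_apply]
    nlinarith

lemma mul_log_div_sub_add_eq_mul_klFun (x : ℝ) {y : ℝ} (hy : y ≠ 0) :
    x * log (x / y) - x + y = y * klFun (x / y) := by
  rw [klFun_apply]
  field_simp
  ring

lemma nonneg_of_forall_mul_add_sq_mul_nonneg {A K : ℝ}
    (h : ∀ s ∈ Set.Ioc (0 : ℝ) 1, 0 ≤ s * A + s ^ 2 * K) : 0 ≤ A := by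
  have hlim : Tendsto (fun s : ℝ => A + s * K) (𝓝[>] 0) (𝓝 A) := by
    have : Tendsto (fun s : ℝ => A + s * K) (𝓝 0) (𝓝 (A + 0 * K)) :=
      ((continuous_const.add (continuous_id.mul continuous_const)).tendsto 0)
    simpa using this.mono_left nhdsWithin_le_nhds
  refine ge_of_tendsto hlim ?_
  filter_upwards [Ioc_mem_nhdsGT one_pos] with s hs
  have hprod : s * 0 ≤ s * (A + s * K) := by linarith [h s hs]
  exact le_of_mul_le_mul_left hprod hs.1

section Bregman

variable {n : ℕ}

lemma breg_eq_sum_mul_klFun (x : Fin n → ℝ) {y : Fin n → ℝ} (hy : ∀ i, y i ≠ 0) :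
    breg x y = ∑ i, y i * klFun (x i / y i) :=
  sum_congr rfl fun i _ => mul_log_div_sub_add_eq_mul_klFun (x i) (hy i)

lemma breg_nonneg {x y : Fin n → ℝ} (hx : ∀ i, 0 ≤ x i) (hy : ∀ i, 0 < y i) :
    0 ≤ breg x y := by
  rw [breg_eq_sum_mul_klFun x fun i => (hy i).ne']
  exact sum_nonneg fun i _ => mul_nonneg (hy i).le (klFun_nonneg (div_nonneg (hx i) (hy i).le))

lemma breg_le_sum_sq_div {x y : Fin n → ℝ} (hx : ∀ i, 0 ≤ x i) (hy : ∀ i, 0 < y i) :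
    breg x y ≤ ∑ i, (x i - y i) ^ 2 / y i := by
  rw [breg_eq_sum_mul_klFun x fun i => (hy i).ne']
  refine sum_le_sum fun i _ => ?_
  calc y i * klFun (x i / y i) ≤ y i * (x i / y i - 1) ^ 2 :=
        mul_le_mul_of_nonneg_left (klFun_le_sq_sub_one (div_nonneg (hx i) (hy i).le)) (hy i).le
    _ = (x i - y i) ^ 2 / y i := by have := (hy i).ne'; field_simp

lemma breg_self (x : Fin n → ℝ) : breg x x = 0 := by
  refine sum_eq_zero fun i _ => ?_
  rcases eq_or_ne (x i) 0 with h | h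
  · simp [h]
  · simp [div_self h]

lemma breg_sub_breg_sub_breg (x : Fin n → ℝ) {y z : Fin n → ℝ} (hy : ∀ i, y i ≠ 0)
    (hz : ∀ i, z i ≠ 0) :
    breg x z - breg x y - breg y z = ∑ i, (x i - y i) * log (y i / z i) := by
  simp only [breg, ← sum_sub_distrib]
  refine sum_congr rfl fun i _ => ?_
  rcases eq_or_ne (x i) 0 with h | hx
  · simp only [h, zero_div, log_zero, mul_zero, sub_self, zero_add, zero_sub, neg_mul]
    ring
  · rw [log_div hx (hz i), log_div hx (hy i), log_div (hy i) (hz i)]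
    ring

lemma breg_mul_exp (q : Fin n → ℝ) {a : Fin n → ℝ} (ha : ∀ i, a i ≠ 0) (c : Fin n → ℝ) :
    breg q (fun i => a i * exp (c i)) =
      breg q a - ∑ i, q i * c i + ∑ i, (a i * exp (c i) - a i) := by
  simp only [breg, ← sum_sub_distrib, ← sum_add_distrib]
  refine sum_congr rfl fun i _ => ?_
  rcases eq_or_ne (q i) 0 with h | hq
  · simp [h]
  · rw [log_div hq (mul_ne_zero (ha i) (exp_ne_zero _)), log_div hq (ha i),
      log_mul (ha i) (exp_ne_zero _), log_exp]
    ring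

/-- Generalised Pythagorean inequality for the Bregman projection `x` of `b` onto `C`. -/
lemma breg_add_breg_le_of_isMinOn {C : Set (Fin n → ℝ)} (hC : Convex ℝ C)
    {b x y : Fin n → ℝ} (hb : ∀ i, 0 < b i) (hx : ∀ i, 0 < x i) (hy : ∀ i, 0 ≤ y i)
    (hxC : x ∈ C) (hyC : y ∈ C) (hmin : IsMinOn (fun q => breg q b) C x) :
    breg y x + breg x b ≤ breg y b := by
  have hthree q := breg_sub_breg_sub_breg q (fun i => (hx i).ne') (fun i => (hb i).ne')
  set A := ∑ i, (y i - x i) * log (x i / b i)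
  set K := ∑ i, (y i - x i) ^ 2 / x i
  suffices 0 ≤ A by linarith [hthree y]
  -- On the segment `q = x + s • (y - x)`, minimality and the three-point identity give
  -- `s * A ≥ -breg q x ≥ -s ^ 2 * K`.
  refine nonneg_of_forall_mul_add_sq_mul_nonneg (K := K) fun s hs => ?_
  set q := x + s • (y - x)
  have hqC : q ∈ C := hC.add_smul_sub_mem hxC hyC ⟨hs.1.le, hs.2⟩
  have hq i : q i = (1 - s) * x i + s * y i := by
    simp only [q, Pi.add_apply, Pi.smul_apply, Pi.sub_apply, smul_eq_mul]; ring
  have hq_nonneg i : 0 ≤ q i := by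
    rw [hq]; nlinarith [hx i, hy i, hs.1, hs.2]
  have hlin : ∑ i, (q i - x i) * log (x i / b i) = s * A := by
    rw [mul_sum]; exact sum_congr rfl fun i _ => by rw [hq]; ring
  have hquad : breg q x ≤ s ^ 2 * K :=
    (breg_le_sum_sq_div hq_nonneg hx).trans_eq <| by
      rw [mul_sum]; exact sum_congr rfl fun i _ => by rw [hq]; ring
  linarith [hthree q, isMinOn_iff.mp hmin q hqC]

lemma mirrorDescent_step_le {C : Set (Fin n → ℝ)} (hC : Convex ℝ C) (η : ℝ) (u : Fin n → ℝ)
    {x x' y b : Fin n → ℝ} (hx : ∀ i, 0 < x i) (hx' : ∀ i, 0 < x' i) (hy : ∀ i, 0 ≤ y i)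
    (hx'C : x' ∈ C) (hyC : y ∈ C)
    (hmin : IsMinOn (fun q => -η * ∑ i, q i * u i + breg q x) C x')
    (hb : ∀ i, b i = x i * exp (η * u i)) :
    η * ∑ i, (y i - x i) * u i ≤ breg y x - breg y x' + breg x b := by
  obtain rfl : b = fun i => x i * exp (η * u i) := funext hb
  have htilt q : breg q (fun i => x i * exp (η * u i)) =
      (-η * ∑ i, q i * u i + breg q x) + ∑ i, (x i * exp (η * u i) - x i) := by
    rw [breg_mul_exp q (fun i => (hx i).ne')]
    simp only [mul_left_comm _ η, ← mul_sum]
    ring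
  have hproj : IsMinOn (fun q => breg q fun i => x i * exp (η * u i)) C x' := by
    refine isMinOn_iff.mpr fun q hq => ?_
    simp only [htilt]
    linarith [isMinOn_iff.mp hmin q hq]
  have hpyth := breg_add_breg_le_of_isMinOn hC (fun i => mul_pos (hx i) (exp_pos _)) hx' hy
    hx'C hyC hproj
  have hx'b := breg_nonneg (fun i => (hx' i).le) fun i => mul_pos (hx i) (exp_pos (η * u i))
  have hinner : ∑ i, (y i - x i) * u i = ∑ i, y i * u i - ∑ i, x i * u i := by
    simp only [sub_mul, sum_sub_distrib]
  rw [htilt y] at hpyth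
  rw [htilt x, breg_self, hinner]
  linarith

end Bregman

lemma convex_clippedSimplex (n : ℕ) (α : ℝ) : Convex ℝ (clippedSimplex n α) := by
  intro x hx y hy a b ha hb hab
  refine ⟨?_, fun i => ?_⟩
  · simp [sum_add_distrib, ← mul_sum, hx.1, hy.1, hab]
  · calc α / n = a * (α / n) + b * (α / n) := by rw [← add_mul, hab, one_mul]
      _ ≤ a * x i + b * y i := by gcongr; exacts [hx.2 i, hy.2 i]

lemma pos_of_mem_clippedSimplex {n : ℕ} {α : ℝ} (hα : 0 < α) {x : Fin n → ℝ}
    (hx : x ∈ clippedSimplex n α) (i : Fin n) : 0 < x i :=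
  (div_pos hα (Nat.cast_pos.mpr i.pos)).trans_le (hx.2 i)

theorem stmt_10_general (n : ℕ) (α η : ℝ) (hα : 0 < α ∧ α < 1) (hη : 0 < η)
    (T : ℕ)
    (p : ℕ → Fin n → ℝ) (hp0 : p 0 ∈ clippedSimplex n α)
    (u : ℕ → Fin n → ℝ)
    (hmin : ∀ t < T, p (t + 1) ∈ clippedSimplex n α ∧
      ∀ q ∈ clippedSimplex n α,
        -η * (∑ i, p (t + 1) i * u t i) + breg (p (t + 1)) (p t) ≤
          -η * (∑ i, q i * u t i) + breg q (p t))
    (pt : ℕ → Fin n → ℝ)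
    (hpt : ∀ t i, pt (t + 1) i = p t i * Real.exp (η * u t i)) :
    ∀ pp ∈ clippedSimplex n α,
      ∑ t ∈ Finset.range T, ∑ i, (pp i - p t i) * u t i ≤
        (1 / η) * (breg pp (p 0) + ∑ t ∈ Finset.range T, breg (p t) (pt (t + 1))) := by
  intro pp hpp
  have hpos := @pos_of_mem_clippedSimplex n α hα.1
  have hmem : ∀ t ≤ T, p t ∈ clippedSimplex n α
    | 0, _ => hp0
    | k + 1, hk => (hmin k hk).1
  have hstep t (ht : t ∈ range T) : η * ∑ i, (pp i - p t i) * u t i ≤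
      breg pp (p t) - breg pp (p (t + 1)) + breg (p t) (pt (t + 1)) := by
    have ht : t < T := mem_range.mp ht
    exact mirrorDescent_step_le (convex_clippedSimplex n α) η (u t) (hpos (hmem t ht.le))
      (hpos (hmin t ht).1) (fun i => (hpos hpp i).le) (hmin t ht).1 hpp
      (isMinOn_iff.mpr (hmin t ht).2) (hpt t)
  have hlast : 0 ≤ breg pp (p T) := breg_nonneg (fun i => (hpos hpp i).le) (hpos (hmem T le_rfl))
  calc ∑ t ∈ range T, ∑ i, (pp i - p t i) * u t i
      = (1 / η) * ∑ t ∈ range T, η * ∑ i, (pp i - p t i) * u t i := by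
        rw [← mul_sum, ← mul_assoc, one_div_mul_cancel hη.ne', one_mul]
    _ ≤ (1 / η) * ∑ t ∈ range T,
          (breg pp (p t) - breg pp (p (t + 1)) + breg (p t) (pt (t + 1))) := by
        gcongr with t ht
        exact hstep t ht
    _ = (1 / η) * (breg pp (p 0) - breg pp (p T) + ∑ t ∈ range T, breg (p t) (pt (t + 1))) := by
        rw [sum_add_distrib, sum_range_sub' (fun t => breg pp (p t))]
    _ ≤ (1 / η) * (breg pp (p 0) + ∑ t ∈ range T, breg (p t) (pt (t + 1))) := by
        gcongr
        linarith

theorem stmt_10 (n : ℕ) (hn : 1 ≤ n) (α η : ℝ) (hα : 0 < α ∧ α < 1) (hη : 0 < η)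
    (T : ℕ) (hT : 1 ≤ T)
    (p : ℕ → Fin n → ℝ) (hp0 : p 0 ∈ clippedSimplex n α)
    (u : ℕ → Fin n → ℝ)
    (hmin : ∀ t < T, p (t + 1) ∈ clippedSimplex n α ∧
      ∀ q ∈ clippedSimplex n α,
        -η * (∑ i, p (t + 1) i * u t i) + breg (p (t + 1)) (p t) ≤
          -η * (∑ i, q i * u t i) + breg q (p t))
    (pt : ℕ → Fin n → ℝ)
    (hpt : ∀ t i, pt (t + 1) i = p t i * Real.exp (η * u t i)) :
    ∀ pp ∈ clippedSimplex n α,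
      ∑ t ∈ Finset.range T, ∑ i, (pp i - p t i) * u t i ≤
        (1 / η) * (breg pp (p 0) + ∑ t ∈ Finset.range T, breg (p t) (pt (t + 1))) :=
  stmt_10_general n α η hα hη T p hp0 u hmin pt hpt
end

section
/- Let n ≥ 2 be an integer, α ∈ (0,1), η > 0, let p ∈ A_α satisfy p_i > 0 for all i, fix i ∈ {1,…,n}, and let û ∈ ℝ^n satisfy û_i ≤ 0 and û_j = 0 for all j ≠ i. Let p⁺ be a minimizer of q ↦ −η·⟨q, û⟩ + D(q‖p) over A_α. Then p⁺_i ≤ p_i. In particular, a provider whose reported utility gain is nonpositive (while the other coordinates of the estimate are zero) never has its sampling probability increased by the OSMD update, and its probability always remains at least α/n. -/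
open Finset

lemma term_nonneg (a b : ℝ) (ha : 0 ≤ a) (hb : 0 < b) :
    0 ≤ a * Real.log (a / b) - a + b := by
  rcases ha.eq_or_lt with h | h
  · simp [← h, hb.le]
  · have h1 : Real.log (b / a) ≤ b / a - 1 := Real.log_le_sub_one_of_pos (by positivity)
    have h2 : Real.log (a / b) = - Real.log (b / a) := by
      rw [← Real.log_inv]; congr 1; field_simp
    rw [h2]
    have h3 : a * (b / a - 1) = b - a := by field_simp
    nlinarith [mul_le_mul_of_nonneg_left h1 h.le]

lemma term_pos (a b : ℝ) (ha : 0 ≤ a) (hb : 0 < b) (hab : a ≠ b) :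
    0 < a * Real.log (a / b) - a + b := by
  rcases ha.eq_or_lt with h | h
  · simp [← h, hb]
  · have hne : b / a ≠ 1 := by
      intro hc
      exact hab (by field_simp at hc; linarith)
    have h1 : Real.log (b / a) < b / a - 1 :=
      Real.log_lt_sub_one_of_pos (by positivity) hne
    have h2 : Real.log (a / b) = - Real.log (b / a) := by
      rw [← Real.log_inv]; congr 1; field_simp
    rw [h2]
    have h3 : a * (b / a - 1) = b - a := by field_simp
    nlinarith [mul_lt_mul_of_pos_left h1 h]

theorem stmt_15 (n : ℕ) (hn : 2 ≤ n) (α η : ℝ) (hα : 0 < α ∧ α < 1) (hη : 0 < η)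
    (p : Fin n → ℝ) (hp : p ∈ clippedSimplex n α) (hppos : ∀ i, 0 < p i)
    (i : Fin n) (u : Fin n → ℝ) (hui : u i ≤ 0) (huj : ∀ j, j ≠ i → u j = 0)
    (pplus : Fin n → ℝ) (hpplus : pplus ∈ clippedSimplex n α)
    (hmin : ∀ q ∈ clippedSimplex n α,
      -η * (∑ k, pplus k * u k) + breg pplus p ≤ -η * (∑ k, q k * u k) + breg q p) :
    pplus i ≤ p i ∧ α / n ≤ pplus i := by
  have hai : 0 < α / n := by
    have : (0:ℝ) < n := by positivity
    exact div_pos hα.1 this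
  have hq0 : ∀ k, 0 ≤ pplus k := fun k => hai.le.trans (hpplus.2 k)
  refine ⟨?_, hpplus.2 i⟩
  by_contra hcon
  push_neg at hcon
  have hle := hmin p hp
  have hsum : ∀ x : Fin n → ℝ, (∑ k, x k * u k) = x i * u i := by
    intro x
    rw [Finset.sum_eq_single i]
    · intro j _ hj; rw [huj j hj, mul_zero]
    · intro h; exact absurd (Finset.mem_univ i) h
  have hbp : breg p p = 0 := by
    unfold breg
    apply Finset.sum_eq_zero
    intro k _
    rw [div_self (hppos k).ne', Real.log_one]
    ring
  rw [hsum pplus, hsum p, hbp] at hle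
  have hD : breg pplus p ≤ η * (pplus i - p i) * u i := by nlinarith
  have hDpos : 0 < breg pplus p := by
    unfold breg
    have := term_pos (pplus i) (p i) (hq0 i) (hppos i) (by linarith)
    have hothers : ∀ k ∈ Finset.univ, k ≠ i →
        (0:ℝ) ≤ pplus k * Real.log (pplus k / p k) - pplus k + p k :=
      fun k _ _ => term_nonneg (pplus k) (p k) (hq0 k) (hppos k)
    calc (0:ℝ) < pplus i * Real.log (pplus i / p i) - pplus i + p i := this
    _ ≤ ∑ k, (pplus k * Real.log (pplus k / p k) - pplus k + p k) := by
      apply Finset.single_le_sum (f := fun k => pplus k * Real.log (pplus k / p k) - pplus k + p k)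
        (fun k _ => term_nonneg (pplus k) (p k) (hq0 k) (hppos k)) (Finset.mem_univ i)
  nlinarith [mul_nonneg (mul_nonneg hη.le (by linarith : (0:ℝ) ≤ pplus i - p i)) (neg_nonneg.2 hui)]
end
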